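/- arXiv:1808.09190 — 6 statements merged into one kernel-verified Lean document; each statement's English description precedes it below -/
import Mathlib

section
/- Let K₁ and K₂ be the rational functions of (t₁,t₂,u₁,u₂,v₁,v₂) defined by K₁ = 2u₁v₁² + 4u₂v₁v₂ − 4v₁ − u₁²/2 − t₁u₁ + u₂/2 + t₂²/(2u₂) and K₂ = (1/t₂)·( −2u₂v₁² + 2u₂²v₂² − 2u₂v₂ + u₁u₂/2 + t₁u₂ − t₂²u₁/(2u₂) ). Then the functions u₁(t₁,t₂) = −t₁, u₂(t₁,t₂) = t₂, v₁(t₁,t₂) = 0, v₂(t₁,t₂) = 3/(4t₂), defined on the open set of ℂ² where t₂ ≠ 0, satisfy the Hamiltonian system ∂u_j/∂t_i = ∂K_i/∂v_j and ∂v_j/∂t_i = −∂K_i/∂u_j for all i,j ∈ {1,2}, the partial derivatives of K_i on the right being evaluated at (t₁,t₂,u₁,u₂,v₁,v₂). -/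
lemma quadDeriv (A B C x : ℂ) : HasDerivAt (fun y : ℂ => A*y^2 + B*y + C) (2*A*x + B) x := by
  have h := (((hasDerivAt_pow 2 x).const_mul A).add ((hasDerivAt_id x).const_mul B)).add
    (hasDerivAt_const x C)
  exact h.congr_deriv (by rw [show (2:ℕ) - 1 = 1 from rfl]; push_cast; ring)

lemma genDeriv (A B C D x : ℂ) (hx : x ≠ 0) :
    HasDerivAt (fun y : ℂ => A*y^2 + B*y + C + D/y) (2*A*x + B - D/x^2) x := by
  have h := (quadDeriv A B C x).add ((hasDerivAt_inv hx).const_mul D)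
  have e1 : (fun y : ℂ => A*y^2 + B*y + C + D/y) = fun y => A*y^2+B*y+C + D*y⁻¹ := by
    funext y; rw [div_eq_mul_inv]
  rw [e1]
  exact h.congr_deriv (by ring)

lemma invDeriv (t₂ : ℂ) (ht₂ : t₂ ≠ 0) :
    HasDerivAt (fun s : ℂ => 3 / (4*s)) (-(3/(4*t₂^2))) t₂ := by
  have h0 := (hasDerivAt_inv ht₂).const_mul (3/4 : ℂ)
  have e1 : (fun s : ℂ => 3/(4*s)) = fun s => 3/4 * s⁻¹ := by funext s; ring
  rw [e1]
  exact h0.congr_deriv (by ring)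

/-- Hamiltonian `K₁` of the rank-2 irregular Garnier system `Kaw₄` with formal
data `(κ₁,κ₂) = (1/2, 3/2)`, in Kawamuko's canonical coordinates. -/
noncomputable def Kaw4_K1 (t₁ t₂ u₁ u₂ v₁ v₂ : ℂ) : ℂ :=
  2 * u₁ * v₁ ^ 2 + 4 * u₂ * v₁ * v₂ - 4 * v₁ - u₁ ^ 2 / 2 - t₁ * u₁
    + u₂ / 2 + t₂ ^ 2 / (2 * u₂)

/-- Hamiltonian `K₂` of the rank-2 irregular Garnier system `Kaw₄`. -/
noncomputable def Kaw4_K2 (t₁ t₂ u₁ u₂ v₁ v₂ : ℂ) : ℂ :=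
  (1 / t₂) * (-2 * u₂ * v₁ ^ 2 + 2 * u₂ ^ 2 * v₂ ^ 2 - 2 * u₂ * v₂
    + u₁ * u₂ / 2 + t₁ * u₂ - t₂ ^ 2 * u₁ / (2 * u₂))

/-- The explicit rational solution `u₁ = -t₁`, `u₂ = t₂`, `v₁ = 0`,
`v₂ = 3/(4t₂)` of the Hamiltonian system with Hamiltonians `K₁, K₂`,
on the open set `t₂ ≠ 0`:
`∂u_j/∂t_i = ∂K_i/∂v_j` and `∂v_j/∂t_i = -∂K_i/∂u_j` for all `i,j ∈ {1,2}`. -/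
theorem kaw4_rational_solution (t₁ t₂ : ℂ) (ht₂ : t₂ ≠ 0) :
    -- ∂u₁/∂t₁ = ∂K₁/∂v₁
    (deriv (fun s : ℂ => -s) t₁
      = deriv (fun v => Kaw4_K1 t₁ t₂ (-t₁) t₂ v (3 / (4 * t₂))) 0) ∧
    -- ∂u₂/∂t₁ = ∂K₁/∂v₂
    (deriv (fun _ : ℂ => t₂) t₁
      = deriv (fun v => Kaw4_K1 t₁ t₂ (-t₁) t₂ 0 v) (3 / (4 * t₂))) ∧
    -- ∂v₁/∂t₁ = -∂K₁/∂u₁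
    (deriv (fun _ : ℂ => (0 : ℂ)) t₁
      = -deriv (fun u => Kaw4_K1 t₁ t₂ u t₂ 0 (3 / (4 * t₂))) (-t₁)) ∧
    -- ∂v₂/∂t₁ = -∂K₁/∂u₂
    (deriv (fun _ : ℂ => 3 / (4 * t₂)) t₁
      = -deriv (fun u => Kaw4_K1 t₁ t₂ (-t₁) u 0 (3 / (4 * t₂))) t₂) ∧
    -- ∂u₁/∂t₂ = ∂K₂/∂v₁
    (deriv (fun _ : ℂ => -t₁) t₂
      = deriv (fun v => Kaw4_K2 t₁ t₂ (-t₁) t₂ v (3 / (4 * t₂))) 0) ∧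
    -- ∂u₂/∂t₂ = ∂K₂/∂v₂
    (deriv (fun s : ℂ => s) t₂
      = deriv (fun v => Kaw4_K2 t₁ t₂ (-t₁) t₂ 0 v) (3 / (4 * t₂))) ∧
    -- ∂v₁/∂t₂ = -∂K₂/∂u₁
    (deriv (fun _ : ℂ => (0 : ℂ)) t₂
      = -deriv (fun u => Kaw4_K2 t₁ t₂ u t₂ 0 (3 / (4 * t₂))) (-t₁)) ∧
    -- ∂v₂/∂t₂ = -∂K₂/∂u₂
    (deriv (fun s : ℂ => 3 / (4 * s)) t₂
      = -deriv (fun u => Kaw4_K2 t₁ t₂ (-t₁) u 0 (3 / (4 * t₂))) t₂) := by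
  have hneg : deriv (fun s : ℂ => -s) t₁ = -1 := by
    simpa using ((hasDerivAt_id t₁).neg).deriv
  refine ⟨?_, ?_, ?_, ?_, ?_, ?_, ?_, ?_⟩
  · -- case 1
    have e : (fun v => Kaw4_K1 t₁ t₂ (-t₁) t₂ v (3 / (4 * t₂)))
        = fun y : ℂ => (2*(-t₁))*y^2 + (4*t₂*(3/(4*t₂)) - 4)*y
          + (-(-t₁)^2/2 - t₁*(-t₁) + t₂/2 + t₂^2/(2*t₂)) := by
      funext y; simp only [Kaw4_K1]; ring
    rw [e, (quadDeriv _ _ _ 0).deriv, hneg]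
    field_simp
    norm_num
  · -- case 2
    have e : (fun v => Kaw4_K1 t₁ t₂ (-t₁) t₂ 0 v)
        = fun y : ℂ => (0:ℂ)*y^2 + (0:ℂ)*y
          + (-(-t₁)^2/2 - t₁*(-t₁) + t₂/2 + t₂^2/(2*t₂)) := by
      funext y; simp only [Kaw4_K1]; ring
    rw [e, (quadDeriv _ _ _ _).deriv]
    simp
  · -- case 3
    have e : (fun u => Kaw4_K1 t₁ t₂ u t₂ 0 (3 / (4 * t₂)))
        = fun y : ℂ => (-(1/2))*y^2 + (-t₁)*y + (t₂/2 + t₂^2/(2*t₂)) := by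
      funext y; simp only [Kaw4_K1]; ring
    rw [e, (quadDeriv _ _ _ _).deriv]
    simp
  · -- case 4
    have e : (fun u => Kaw4_K1 t₁ t₂ (-t₁) u 0 (3 / (4 * t₂)))
        = fun y : ℂ => (0:ℂ)*y^2 + (1/2)*y + (-(-t₁)^2/2 - t₁*(-t₁)) + (t₂^2/2)/y := by
      funext y; simp only [Kaw4_K1]; ring
    rw [e, (genDeriv _ _ _ _ _ ht₂).deriv]
    simp only [deriv_const]
    field_simp
    ring
  · -- case 5
    have e : (fun v => Kaw4_K2 t₁ t₂ (-t₁) t₂ v (3 / (4 * t₂)))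
        = fun y : ℂ => ((1/t₂)*(-2*t₂))*y^2 + (0:ℂ)*y
          + ((1/t₂)*(2*t₂^2*(3/(4*t₂))^2 - 2*t₂*(3/(4*t₂)) + (-t₁)*t₂/2 + t₁*t₂
              - t₂^2*(-t₁)/(2*t₂))) := by
      funext y; simp only [Kaw4_K2]; ring
    rw [e, (quadDeriv _ _ _ _).deriv]
    simp
  · -- case 6
    have e : (fun v => Kaw4_K2 t₁ t₂ (-t₁) t₂ 0 v)
        = fun y : ℂ => ((1/t₂)*(2*t₂^2))*y^2 + ((1/t₂)*(-2*t₂))*y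
          + ((1/t₂)*((-t₁)*t₂/2 + t₁*t₂ - t₂^2*(-t₁)/(2*t₂))) := by
      funext y; simp only [Kaw4_K2]; ring
    rw [e, (quadDeriv _ _ _ _).deriv]
    have : deriv (fun s : ℂ => s) t₂ = 1 := by simpa using (hasDerivAt_id t₂).deriv
    rw [this]
    field_simp
    ring
  · -- case 7
    have e : (fun u => Kaw4_K2 t₁ t₂ u t₂ 0 (3 / (4 * t₂)))
        = fun y : ℂ => (0:ℂ)*y^2 + ((1/t₂)*(t₂/2 - t₂^2/(2*t₂)))*y
          + ((1/t₂)*(2*t₂^2*(3/(4*t₂))^2 - 2*t₂*(3/(4*t₂)) + t₁*t₂)) := by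
      funext y; simp only [Kaw4_K2]; ring
    rw [e, (quadDeriv _ _ _ _).deriv]
    simp only [deriv_const]
    field_simp
    ring
  · -- case 8
    have e : (fun u => Kaw4_K2 t₁ t₂ (-t₁) u 0 (3 / (4 * t₂)))
        = fun y : ℂ => ((1/t₂)*(2*(3/(4*t₂))^2))*y^2
          + ((1/t₂)*(-2*(3/(4*t₂)) + (-t₁)/2 + t₁))*y + (0:ℂ)
          + ((1/t₂)*(t₂^2*t₁/2))/y := by
      funext y; simp only [Kaw4_K2]; ring
    rw [e, (genDeriv _ _ _ _ _ ht₂).deriv, (invDeriv t₂ ht₂).deriv]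
    field_simp
    ring_nf
end

section
/- Let θ ∈ ℂ, θ ≠ 0. The function q(t) = t/θ + 1 is a solution of the Painlevé V equation with parameters (α,β,γ,δ) = (θ²/2, −1/2, θ, −1/2) on any open subset of ℂ∖{0} on which q(t) ≠ 0 and q(t) ≠ 1; that is, q'' = (1/(2q) + 1/(q−1))(q')² − q'/t + ((q−1)²/t²)(αq + β/q) + γq/t + δ·q(q+1)/(q−1) holds there with q' = 1/θ and q'' = 0. -/
/-- For `θ ≠ 0`, the function `q(t) = t/θ + 1` solves the Painlevé V equation
with parameters `(α,β,γ,δ) = (θ²/2, -1/2, θ, -1/2)` wherever `t ≠ 0`,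
`q(t) ≠ 0` and `q(t) ≠ 1`: with `q' = 1/θ` and `q'' = 0`, the Painlevé V
identity holds. -/
theorem painleveV_laguerre_solution (θ : ℂ) (hθ : θ ≠ 0) (t : ℂ) (ht : t ≠ 0)
    (hq0 : t / θ + 1 ≠ 0) (hq1 : t / θ + 1 ≠ 1) :
    let q : ℂ := t / θ + 1
    let α : ℂ := θ ^ 2 / 2
    let β : ℂ := -1 / 2
    let γ : ℂ := θ
    let δ : ℂ := -1 / 2
    (0 : ℂ) = (1 / (2 * q) + 1 / (q - 1)) * (1 / θ) ^ 2 - (1 / θ) / t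
      + ((q - 1) ^ 2 / t ^ 2) * (α * q + β / q) + γ * q / t
      + δ * q * (q + 1) / (q - 1) := by
  obtain ⟨u, rfl⟩ : ∃ u, t = u * θ := ⟨t / θ, by field_simp⟩
  have hu : u ≠ 0 := fun h => ht (by simp [h])
  rw [mul_div_assoc, div_self hθ, mul_one] at hq0 hq1 ⊢
  intro q α β γ δ
  have hu1 : u + 1 ≠ 0 := hq0
  simp only [q, α, β, γ, δ]
  have hA : u ^ 3 * θ ^ 3 * 4 + u ^ 4 * θ ^ 3 * 4 ≠ 0 := by
    have : u ^ 3 * θ ^ 3 * 4 + u ^ 4 * θ ^ 3 * 4 = 4 * (u ^ 3 * θ ^ 3) * (u + 1) := by ring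
    rw [this]
    exact mul_ne_zero (mul_ne_zero (by norm_num) (mul_ne_zero (pow_ne_zero _ hu) (pow_ne_zero _ hθ))) hu1
  have hB : u ^ 2 * θ ^ 4 * 2 + u ^ 3 * θ ^ 4 * 2 ≠ 0 := by
    have : u ^ 2 * θ ^ 4 * 2 + u ^ 3 * θ ^ 4 * 2 = 2 * (u ^ 2 * θ ^ 4) * (u + 1) := by ring
    rw [this]
    exact mul_ne_zero (mul_ne_zero (by norm_num) (mul_ne_zero (pow_ne_zero _ hu) (pow_ne_zero _ hθ))) hu1
  field_simp
  ring_nf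
end

section
/- Let θ ∈ ℂ, θ ≠ 0, let U ⊆ ℂ∖{0} be open, and let r : U → ℂ be a differentiable function with r(t)² = t and r nowhere zero on U (a branch of √t). Then the function q(t) = 2r(t)/θ + 1 is, on any open subset of U where q is nowhere zero, a solution of the Painlevé V equation with parameters (α,β,γ,δ) = (θ²/2, −1/8, −2, 0); that is, q'' = (1/(2q) + 1/(q−1))(q')² − q'/t + ((q−1)²/t²)(αq + β/q) + γq/t + δ·q(q+1)/(q−1) holds there. -/
/-- For `θ ≠ 0` and a differentiable branch `r` of `√t` on an open `U ⊆ ℂ∖{0}`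
(i.e. `r² = t`, `r ≠ 0`), the function `q(t) = 2r(t)/θ + 1` solves the
Painlevé V equation with parameters `(α,β,γ,δ) = (θ²/2, -1/8, -2, 0)` at every
point of `U` where `q` does not vanish. -/
theorem painleveV_algebraic_solution (θ : ℂ) (hθ : θ ≠ 0)
    (U : Set ℂ) (hU : IsOpen U) (hU0 : ∀ t ∈ U, t ≠ 0)
    (r : ℂ → ℂ) (hr : ∀ t ∈ U, DifferentiableAt ℂ r t)
    (hr2 : ∀ t ∈ U, r t ^ 2 = t) (hrne : ∀ t ∈ U, r t ≠ 0) :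
    ∀ t ∈ U, 2 * r t / θ + 1 ≠ 0 →
      deriv (deriv (fun s => 2 * r s / θ + 1)) t =
        (1 / (2 * (2 * r t / θ + 1)) + 1 / ((2 * r t / θ + 1) - 1)) *
            (deriv (fun s => 2 * r s / θ + 1) t) ^ 2
          - (deriv (fun s => 2 * r s / θ + 1) t) / t
          + (((2 * r t / θ + 1) - 1) ^ 2 / t ^ 2) *
            ((θ ^ 2 / 2) * (2 * r t / θ + 1) + (-1 / 8) / (2 * r t / θ + 1))
          + (-2) * (2 * r t / θ + 1) / t
          + 0 * (2 * r t / θ + 1) * ((2 * r t / θ + 1) + 1) /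
            ((2 * r t / θ + 1) - 1) := by
  -- derivative of r on U
  have hrd : ∀ t ∈ U, HasDerivAt r (1 / (2 * r t)) t := by
    intro t ht
    have hd := (hr t ht).hasDerivAt
    have hsq : HasDerivAt (fun s => r s ^ 2) (2 * r t ^ (2-1) * deriv r t) t := hd.pow 2
    have heq : (fun s => r s ^ 2) =ᶠ[nhds t] (fun s => s) :=
      Filter.eventuallyEq_of_mem (hU.mem_nhds ht) (fun s hs => hr2 s hs)
    have hsq' : HasDerivAt (fun s : ℂ => s) (2 * r t ^ (2-1) * deriv r t) t :=
      hsq.congr_of_eventuallyEq heq.symm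
    have h1 : (2 : ℂ) * r t ^ (2-1) * deriv r t = 1 := by
      have := hsq'.deriv
      simpa using this.symm
    have : deriv r t = 1 / (2 * r t) := by
      rw [eq_div_iff (mul_ne_zero two_ne_zero (hrne t ht))]
      linear_combination h1
    rwa [this] at hd
  -- q derivative
  have hqd : ∀ t ∈ U, HasDerivAt (fun s => 2 * r s / θ + 1) (1 / (θ * r t)) t := by
    intro t ht
    have := (((hrd t ht).const_mul 2).div_const θ).add_const 1
    have hrt := hrne t ht
    rw [show (1:ℂ) / (θ * r t) = 2 * (1 / (2 * r t)) / θ by field_simp]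
    exact this
  have hqderiv : ∀ t ∈ U, deriv (fun s => 2 * r s / θ + 1) t = 1 / (θ * r t) := by
    intro t ht; exact (hqd t ht).deriv
  intro t ht hq
  have hrt := hrne t ht
  have ht0 := hU0 t ht
  have hqm1 : (2 * r t / θ + 1) - 1 ≠ 0 := by
    simp only [add_sub_cancel_right]
    exact div_ne_zero (by simpa using hrt) hθ
  -- second derivative
  have heq2 : deriv (fun s => 2 * r s / θ + 1) =ᶠ[nhds t] (fun s => 1 / (θ * r s)) :=
    Filter.eventuallyEq_of_mem (hU.mem_nhds ht) (fun s hs => hqderiv s hs)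
  have hne : θ * r t ≠ 0 := mul_ne_zero hθ hrt
  have hdd : HasDerivAt (fun s => 1 / (θ * r s))
      ((0 * (θ * r t) - 1 * (θ * (1 / (2 * r t)))) / (θ * r t) ^ 2) t :=
    (hasDerivAt_const t (1:ℂ)).div ((hrd t ht).const_mul θ) hne
  have h2 : deriv (deriv (fun s => 2 * r s / θ + 1)) t
      = (0 * (θ * r t) - 1 * (θ * (1 / (2 * r t)))) / (θ * r t) ^ 2 := by
    rw [Filter.EventuallyEq.deriv_eq heq2]
    exact hdd.deriv
  rw [h2, hqderiv t ht]
  set x := r t with hx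
  have hT : x ^ 2 = t := hr2 t ht
  rw [← hT] at ht0 ⊢
  have hq' : 2 * x + θ ≠ 0 := by
    intro h; apply hq
    field_simp
    linear_combination h
  have e1 : 2 * x / θ + 1 = (2 * x + θ) / θ := by field_simp
  rw [e1]
  have hA : θ ^ 4 * x ^ 7 * 32 + θ ^ 5 * x ^ 6 * 16 ≠ 0 := by
    have e : θ ^ 4 * x ^ 7 * 32 + θ ^ 5 * x ^ 6 * 16 = 16 * θ ^ 4 * x ^ 6 * (2 * x + θ) := by
      ring
    rw [e]
    exact mul_ne_zero (mul_ne_zero (mul_ne_zero (by norm_num) (pow_ne_zero _ hθ))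
      (pow_ne_zero _ hrt)) hq'
  have hB : θ ^ 3 * x ^ 7 * 8 + θ ^ 4 * x ^ 6 * 4 ≠ 0 := by
    have e : θ ^ 3 * x ^ 7 * 8 + θ ^ 4 * x ^ 6 * 4 = 4 * θ ^ 3 * x ^ 6 * (2 * x + θ) := by
      ring
    rw [e]
    exact mul_ne_zero (mul_ne_zero (mul_ne_zero (by norm_num) (pow_ne_zero _ hθ))
      (pow_ne_zero _ hrt)) hq'
  field_simp
  have hD : θ ^ 2 * (x ^ 2) ^ 2 * (2 * θ * (8 * (2 * x + θ))) * (θ * x ^ 2) ≠ 0 :=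
    mul_ne_zero (mul_ne_zero (mul_ne_zero (pow_ne_zero 2 hθ) (pow_ne_zero 2 ht0))
      (mul_ne_zero (mul_ne_zero two_ne_zero hθ) (mul_ne_zero (by norm_num) hq')))
      (mul_ne_zero hθ ht0)
  have hD1 : 2 * (2 * x + θ) * (2 * x) * (θ * x) ^ 2 * (θ * x * x ^ 2) ≠ 0 :=
    mul_ne_zero (mul_ne_zero (mul_ne_zero (mul_ne_zero two_ne_zero hq')
      (mul_ne_zero two_ne_zero hrt)) (pow_ne_zero 2 hne))
      (mul_ne_zero (mul_ne_zero hθ hrt) ht0)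
  simp only [add_sub_cancel_right]
  have hq'' : x * 2 + θ ≠ 0 := by rwa [mul_comm]
  field_simp
  ring
end

section
/- Let d ≥ 1, n ≥ 0, B ≥ 0 and g, g₀ ≥ 0 be integers. For each k ∈ {1,…,n} suppose given: a number κ_k ∈ (1/2)·ℤ≥0; a list of positive integers m_{k,1},…,m_{k,s_k} with Σ_{l=1}^{s_k} m_{k,l} = d; and, when κ_k = 0, an order ν_k which is either an integer ≥ 2 or ∞. Set R_k = d − s_k and define rational numbers N_k as follows: if κ_k = 0 then N_k = #{ l : ν_k does not divide m_{k,l} } (with every l counted when ν_k = ∞); if κ_k is a positive integer then N_k = Σ_l (1 + m_{k,l}·κ_k); if κ_k ∈ ℤ_{>0} − 1/2 then N_k = Σ_l (1 + m_{k,l}·κ_k + ε_l/2) where ε_l = 1 if m_{k,l} is odd and ε_l = 0 if m_{k,l} is even. Assume the Riemann–Hurwitz identity 2g − 2 = d(2g₀ − 2) + B + Σ_{k=1}^n R_k. Define T = 3g − 3 + Σ_{k=1}^n N_k and χ = 2 − 2g₀ − Σ_{k=1}^n (1 + κ_k) + Σ_{k : κ_k = 0, ν_k < ∞} 1/ν_k.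 Then T − B ≥ g − 1 − d·χ. -/
private lemma aux_log (ν : ℕ) (hν : ν = 0 ∨ 2 ≤ ν) :
    ∀ l : List ℕ, (∀ x ∈ l, 0 < x) →
      (l.length : ℚ) - (l.sum : ℚ) / ν ≤
        (l.map (fun x => if ν ∣ x then (0 : ℚ) else 1)).sum := by
  intro l
  induction l with
  | nil => simp
  | cons a t ih =>
    intro h
    have ha := h a (by simp)
    have ht := ih (fun x hx => h x (List.mem_cons_of_mem _ hx))
    have key : (1 : ℚ) - (a : ℚ) / ν ≤ if ν ∣ a then (0 : ℚ) else 1 := by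
      split_ifs with hdvd
      · rcases hν with h0 | h2
        · subst h0
          simp only [Nat.zero_dvd] at hdvd
          omega
        · have hν0 : (0 : ℚ) < ν := by positivity
          have hle : (ν : ℚ) ≤ a := by exact_mod_cast Nat.le_of_dvd ha hdvd
          have : (1 : ℚ) ≤ (a : ℚ) / ν := (one_le_div hν0).mpr hle
          linarith
      · have : (0 : ℚ) ≤ (a : ℚ) / ν := by positivity
        linarith
    simp only [List.length_cons, List.sum_cons, List.map_cons]
    have e1 : ((t.length + 1 : ℕ) : ℚ) = (t.length : ℚ) + 1 := by push_cast; ring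
    have e2 : ((a + t.sum : ℕ) : ℚ) = (a : ℚ) + (t.sum : ℚ) := by push_cast; ring
    rw [e1, e2]
    have hsplit : ((a : ℚ) + (t.sum : ℚ)) / ν = (a : ℚ) / ν + (t.sum : ℚ) / ν :=
      add_div _ _ _
    linarith

private lemma aux_map : ∀ l : List ℕ,
    (do let a ← l; pure ((a : ℚ))) = l.map (fun a : ℕ => (a : ℚ)) := by
  intro l
  induction l with
  | nil => rfl
  | cons a t ih =>
    show (a :: t).flatMap _ = _
    rw [List.flatMap_cons, List.map_cons, ← ih]
    rfl

private lemma aux_lin (c : ℚ) :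
    ∀ l : List ℕ, ((l.map (fun a : ℕ => (a : ℚ))).map (fun x : ℚ => 1 + x * c)).sum
      = (l.length : ℚ) + (l.sum : ℚ) * c := by
  intro l
  induction l with
  | nil => simp
  | cons a t ih =>
    simp only [List.length_cons, List.sum_cons, List.map_cons, ih]
    have e1 : ((t.length + 1 : ℕ) : ℚ) = (t.length : ℚ) + 1 := by push_cast; ring
    have e2 : ((a + t.sum : ℕ) : ℚ) = (a : ℚ) + (t.sum : ℚ) := by push_cast; ring
    rw [e1, e2]
    ring

private lemma aux_half (c : ℚ) :
    ∀ l : List ℕ, (l.length : ℚ) + (l.sum : ℚ) * c ≤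
      ((l.map (fun a : ℕ => (a : ℚ))).map
        (fun x : ℚ => 1 + x * c + if x % 2 = 1 then (1 : ℚ) / 2 else 0)).sum := by
  intro l
  induction l with
  | nil => simp
  | cons a t ih =>
    have hε : (0 : ℚ) ≤ if (a : ℚ) % 2 = 1 then (1 : ℚ) / 2 else 0 := by positivity
    simp only [List.length_cons, List.sum_cons, List.map_cons]
    have e1 : ((t.length + 1 : ℕ) : ℚ) = (t.length : ℚ) + 1 := by push_cast; ring
    have e2 : ((a + t.sum : ℕ) : ℚ) = (a : ℚ) + (t.sum : ℚ) := by push_cast; ring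
    rw [e1, e2]
    linarith

/-- Irregular Riemann–Hurwitz/Teichmüller bound: for a degree-`d` ramified
cover of a rank-2 irregular differential equation with `n` poles of
irregularity indices `κ k ∈ (1/2)ℤ≥0` and orbifold orders `ν k`
(with the convention `ν k = 0` meaning `ν k = ∞`, so that `ν k ∣ x` never
holds for `x > 0` and `1/(ν k : ℚ) = 0`), with fiber multiplicities `m k`
over the `k`-th pole summing to `d`, total fiber ramification
`R k = d - s k`, number of poles with multiplicity `N k` of the normalized
pull-back in the fiber, Riemann–Hurwitz identity
`2g - 2 = d(2g₀ - 2) + B + Σ R k`, irregular Teichmüller dimension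
`T = 3g - 3 + Σ N k` and irregular Euler characteristic
`χ = 2 - 2g₀ - Σ (1 + κ k) + Σ_{κ k = 0} 1/ν k`, one has
`T - B ≥ g - 1 - d·χ`. -/
theorem irregular_riemann_hurwitz_bound
    (d n B g g₀ : ℕ) (hd : 1 ≤ d)
    (κ : Fin n → ℚ) (hκ : ∀ k, ∃ j : ℕ, 2 * κ k = (j : ℚ))
    (m : Fin n → List ℕ)
    (hmpos : ∀ k, ∀ x ∈ m k, 0 < x)
    (hmsum : ∀ k, (m k).sum = d)
    (ν : Fin n → ℕ)
    (hν : ∀ k, κ k = 0 → ν k = 0 ∨ 2 ≤ ν k)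
    (R : Fin n → ℚ) (hR : ∀ k, R k = (d : ℚ) - (m k).length)
    (N : Fin n → ℚ)
    -- logarithmic pole: `N k` counts the points of the fiber whose
    -- multiplicity is not divisible by the orbifold order
    (hN0 : ∀ k, κ k = 0 →
      N k = ((m k).map (fun x => if ν k ∣ x then (0 : ℚ) else 1)).sum)
    -- unramified irregular pole, `κ k ∈ ℤ_{>0}`
    (hNint : ∀ k, ∀ j : ℕ, 0 < j → κ k = (j : ℚ) →
      N k = ((m k).map (fun x => 1 + (x : ℚ) * κ k)).sum)
    -- ramified irregular pole, `κ k ∈ ℤ_{>0} - 1/2`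
    (hNhalf : ∀ k, ∀ j : ℕ, κ k = (j : ℚ) + 1 / 2 →
      N k = ((m k).map
        (fun x => 1 + (x : ℚ) * κ k + if x % 2 = 1 then (1 : ℚ) / 2 else 0)).sum)
    (T χ : ℚ)
    (hRH : 2 * (g : ℚ) - 2 = d * (2 * (g₀ : ℚ) - 2) + B + ∑ k, R k)
    (hT : T = 3 * (g : ℚ) - 3 + ∑ k, N k)
    (hχ : χ = 2 - 2 * (g₀ : ℚ) - ∑ k, (1 + κ k)
      + ∑ k, (if κ k = 0 then 1 / (ν k : ℚ) else 0)) :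
    T - B ≥ (g : ℚ) - 1 - d * χ := by
  have key : ∀ k, (d : ℚ) * (1 + κ k)
      - (d : ℚ) * (if κ k = 0 then 1 / (ν k : ℚ) else 0) ≤ N k + R k := by
    intro k
    have hsumcast : ((m k).sum : ℚ) = (d : ℚ) := by exact_mod_cast hmsum k
    obtain ⟨j, hj⟩ := hκ k
    rcases Nat.even_or_odd j with ⟨i, hi⟩ | ⟨i, hi⟩
    · -- κ k = i
      have hκi : κ k = (i : ℚ) := by
        subst hi; push_cast at hj; linarith
      rcases Nat.eq_zero_or_pos i with hi0 | hipos
      · -- κ k = 0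
        have h0 : κ k = 0 := by rw [hκi, hi0]; norm_num
        have hb := aux_log (ν k) (hν k h0) (m k) (hmpos k)
        rw [hsumcast] at hb
        rw [hN0 k h0, hR k, if_pos h0, h0]
        have hdν : (d : ℚ) * (1 / (ν k : ℚ)) = (d : ℚ) / ν k := by ring
        linarith
      · have hne : κ k ≠ 0 := by
          rw [hκi]
          exact Nat.cast_ne_zero.mpr hipos.ne'
        rw [hNint k i hipos hκi, aux_map, hR k, if_neg hne, aux_lin, hsumcast]
        linarith
    · -- κ k = i + 1/2
      have hκi : κ k = (i : ℚ) + 1 / 2 := by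
        subst hi; push_cast at hj; linarith
      have hne : κ k ≠ 0 := by rw [hκi]; positivity
      have hb := aux_half (κ k) (m k)
      rw [hsumcast] at hb
      rw [hNhalf k i hκi, aux_map, hR k, if_neg hne]
      linarith
  have hsum : (d : ℚ) * ∑ k, (1 + κ k)
      - (d : ℚ) * ∑ k, (if κ k = 0 then 1 / (ν k : ℚ) else 0)
      ≤ (∑ k, N k) + ∑ k, R k := by
    rw [Finset.mul_sum, Finset.mul_sum, ← Finset.sum_sub_distrib, ← Finset.sum_add_distrib]
    exact Finset.sum_le_sum fun k _ => key k
  have hdχ : (d : ℚ) * χ = (d : ℚ) * (2 - 2 * (g₀ : ℚ))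
      - (d : ℚ) * ∑ k, (1 + κ k)
      + (d : ℚ) * ∑ k, (if κ k = 0 then 1 / (ν k : ℚ) else 0) := by
    rw [hχ]; ring
  linarith
end

section
/- Under the same hypotheses, data and definitions as in the Riemann–Hurwitz/Teichmüller inequality (d ≥ 1, n ≥ 0, B ≥ 0, g, g₀ ≥ 0 integers; for each k: κ_k ∈ (1/2)·ℤ≥0, positive integers m_{k,1},…,m_{k,s_k} summing to d, ν_k ∈ ℤ≥2 ∪ {∞} when κ_k = 0; R_k = d − s_k; N_k defined case-by-case as there; the identity 2g − 2 = d(2g₀ − 2) + B + Σ_k R_k; T = 3g − 3 + Σ_k N_k; χ = 2 − 2g₀ − Σ_k (1 + κ_k) + Σ_{κ_k=0, ν_k<∞} 1/ν_k), assume moreover that χ < 0 and that T ≤ B. Then g = 0 (hence also g₀ = 0) and d·|χ| ≤ 1. -/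
private lemma coe_list_eq (l : List ℕ) :
    (do let a ← l; pure ((a : ℚ))) = l.map (Nat.cast : ℕ → ℚ) := by
  induction l with
  | nil => rfl
  | cons a t ih => simp only [List.map_cons, ← ih]; rfl

private lemma length_le_sum' (l : List ℕ) (h : ∀ x ∈ l, 0 < x) : l.length ≤ l.sum := by
  induction l with
  | nil => simp
  | cons a t ih =>
    have ha : 0 < a := h a List.mem_cons_self
    have ht := ih (fun x hx => h x (List.mem_cons_of_mem a hx))
    simp only [List.length_cons, List.sum_cons]
    omega

private lemma map_sum_affine (c : ℚ) (l : List ℕ) :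
    ((l.map (Nat.cast : ℕ → ℚ)).map (fun x => 1 + x * c)).sum
      = l.length + c * l.sum := by
  induction l with
  | nil => simp
  | cons a t ih =>
    simp only [List.map_cons, List.sum_cons, List.length_cons, ih]
    push_cast
    ring

private lemma map_sum_half_ge (c : ℚ) (l : List ℚ) :
    (l.map (fun x => 1 + x * c)).sum ≤
      (l.map (fun x => 1 + x * c + if x % 2 = 1 then (1 : ℚ) / 2 else 0)).sum := by
  induction l with
  | nil => simp
  | cons a t ih =>
    simp only [List.map_cons, List.sum_cons]
    have h : (0:ℚ) ≤ if a % 2 = 1 then (1 : ℚ) / 2 else 0 := by positivity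
    linarith

private lemma div_indicator_bound (ν : ℕ) (l : List ℕ) (hpos : ∀ x ∈ l, 0 < x) :
    (l.length : ℚ) - (l.sum : ℚ) / ν ≤
      (l.map (fun x => if ν ∣ x then (0 : ℚ) else 1)).sum := by
  induction l with
  | nil => simp
  | cons a t ih =>
    have hpa : 0 < a := hpos a List.mem_cons_self
    have iht := ih (fun x hx => hpos x (List.mem_cons_of_mem a hx))
    simp only [List.map_cons, List.sum_cons, List.length_cons]
    have hsplit : ((a + t.sum : ℕ) : ℚ) / ν = (a : ℚ) / ν + (t.sum : ℚ) / ν := by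
      push_cast; ring
    have key : 1 - (a : ℚ) / ν ≤ (if ν ∣ a then (0 : ℚ) else 1) := by
      by_cases hdvd : ν ∣ a
      · rw [if_pos hdvd]
        rcases Nat.eq_zero_or_pos ν with h0 | hν
        · subst h0
          exact absurd (Nat.eq_zero_of_zero_dvd hdvd) (by omega)
        · have hle : (ν : ℚ) ≤ (a : ℚ) := by exact_mod_cast Nat.le_of_dvd hpa hdvd
          have hνQ : (0:ℚ) < ν := by exact_mod_cast hν
          have : (1:ℚ) ≤ (a : ℚ) / ν := (one_le_div hνQ).mpr hle
          linarith
      · rw [if_neg hdvd]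
        have : (0:ℚ) ≤ (a : ℚ) / ν := by positivity
        linarith
    push_cast
    push_cast at hsplit iht
    linarith

/-- Under the hypotheses of the irregular Riemann–Hurwitz/Teichmüller bound
(same data as there: degree-`d` cover, `n` poles with irregularity indices
`κ k ∈ (1/2)ℤ≥0` and orbifold orders `ν k` — convention `ν k = 0` means `∞` —
fiber multiplicities `m k` summing to `d`, `R k = d - s k`, `N k` defined
case-by-case, Riemann–Hurwitz identity, `T = 3g - 3 + Σ N k`,
`χ = 2 - 2g₀ - Σ(1 + κ k) + Σ_{κ k = 0} 1/ν k`), if moreover `χ < 0` and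
`T ≤ B`, then `g = 0` (hence `g₀ = 0`) and `d·|χ| ≤ 1`. -/
theorem irregular_cover_degree_bound
    (d n B g g₀ : ℕ) (hd : 1 ≤ d)
    (κ : Fin n → ℚ) (hκ : ∀ k, ∃ j : ℕ, 2 * κ k = (j : ℚ))
    (m : Fin n → List ℕ)
    (hmpos : ∀ k, ∀ x ∈ m k, 0 < x)
    (hmsum : ∀ k, (m k).sum = d)
    (ν : Fin n → ℕ)
    (hν : ∀ k, κ k = 0 → ν k = 0 ∨ 2 ≤ ν k)
    (R : Fin n → ℚ) (hR : ∀ k, R k = (d : ℚ) - (m k).length)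
    (N : Fin n → ℚ)
    (hN0 : ∀ k, κ k = 0 →
      N k = ((m k).map (fun x => if ν k ∣ x then (0 : ℚ) else 1)).sum)
    (hNint : ∀ k, ∀ j : ℕ, 0 < j → κ k = (j : ℚ) →
      N k = ((m k).map (fun x => 1 + (x : ℚ) * κ k)).sum)
    (hNhalf : ∀ k, ∀ j : ℕ, κ k = (j : ℚ) + 1 / 2 →
      N k = ((m k).map
        (fun x => 1 + (x : ℚ) * κ k + if x % 2 = 1 then (1 : ℚ) / 2 else 0)).sum)
    (T χ : ℚ)
    (hRH : 2 * (g : ℚ) - 2 = d * (2 * (g₀ : ℚ) - 2) + B + ∑ k, R k)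
    (hT : T = 3 * (g : ℚ) - 3 + ∑ k, N k)
    (hχ : χ = 2 - 2 * (g₀ : ℚ) - ∑ k, (1 + κ k)
      + ∑ k, (if κ k = 0 then 1 / (ν k : ℚ) else 0))
    (hχneg : χ < 0) (hTB : T ≤ (B : ℚ)) :
    g = 0 ∧ g₀ = 0 ∧ (d : ℚ) * |χ| ≤ 1 := by
  -- key per-index estimate
  have key : ∀ k, (d : ℚ) * (1 + κ k)
      - (d : ℚ) * (if κ k = 0 then 1 / (ν k : ℚ) else 0) ≤ N k + R k := by
    intro k
    obtain ⟨j, hj⟩ := hκ k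
    rcases Nat.even_or_odd j with ⟨j', hj'⟩ | ⟨j', hj'⟩
    · -- κ k = j'
      have hκk : κ k = (j' : ℚ) := by
        have h2 : (2:ℚ) * κ k = 2 * (j' : ℚ) := by
          rw [hj, hj']; push_cast; ring
        linarith
      rcases Nat.eq_zero_or_pos j' with h0 | hpos'
      · -- κ k = 0
        have hκ0 : κ k = 0 := by rw [hκk, h0]; norm_num
        have hb := div_indicator_bound (ν k) (m k) (hmpos k)
        rw [hmsum k] at hb
        rw [hN0 k hκ0, hR k, hκ0, if_pos rfl]
        have hdiv : (d : ℚ) / (ν k) = (d : ℚ) * (1 / (ν k : ℚ)) := by ring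
        linarith
      · have hne : κ k ≠ 0 := by
          rw [hκk]
          exact Nat.cast_ne_zero.mpr (by omega)
        rw [hNint k j' hpos' hκk, hR k, if_neg hne, coe_list_eq, map_sum_affine, hmsum k]
        linarith
    · -- κ k = j' + 1/2
      have hκk : κ k = (j' : ℚ) + 1 / 2 := by
        have h2 : (2:ℚ) * κ k = 2 * ((j' : ℚ) + 1 / 2) := by
          rw [hj, hj']; push_cast; ring
        linarith
      have hne : κ k ≠ 0 := by
        rw [hκk]
        have hj'0 : (0:ℚ) ≤ (j' : ℚ) := Nat.cast_nonneg j'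
        intro h; linarith [h]
      rw [hNhalf k j' hκk, hR k, if_neg hne, coe_list_eq]
      have h1 := map_sum_half_ge (κ k) ((m k).map (Nat.cast : ℕ → ℚ))
      rw [map_sum_affine] at h1
      rw [hmsum k] at h1
      linarith
  -- sum the estimate
  have hsum : (d : ℚ) * (∑ k, (1 + κ k))
      - (d : ℚ) * (∑ k, (if κ k = 0 then 1 / (ν k : ℚ) else 0))
      ≤ (∑ k, N k) + (∑ k, R k) := by
    have h := Finset.sum_le_sum (fun k (_ : k ∈ Finset.univ) => key k)
    rw [Finset.sum_sub_distrib, Finset.sum_add_distrib, ← Finset.mul_sum, ← Finset.mul_sum] at h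
    exact h
  have h1 : (g : ℚ) + ((∑ k, N k) + (∑ k, R k)) + (d : ℚ) * (2 * (g₀ : ℚ) - 2) ≤ 1 := by
    rw [hT] at hTB; linarith
  have h3 : (d : ℚ) * (2 - 2 * (g₀ : ℚ) - χ) ≤ (∑ k, N k) + (∑ k, R k) := by
    have e : (d : ℚ) * (2 - 2 * (g₀ : ℚ) - χ)
        = (d : ℚ) * (∑ k, (1 + κ k))
          - (d : ℚ) * (∑ k, (if κ k = 0 then 1 / (ν k : ℚ) else 0)) := by
      rw [hχ]; ring
    linarith [hsum, e.le, e.ge]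
  have hdpos : (0:ℚ) < d := by exact_mod_cast hd
  have hdχ : (d : ℚ) * χ < 0 := mul_neg_of_pos_of_neg hdpos hχneg
  have hgle : (g : ℚ) - (d : ℚ) * χ ≤ 1 := by nlinarith [h1, h3]
  have hglt : (g : ℚ) < 1 := by linarith
  have hg0 : g = 0 := by exact_mod_cast Nat.lt_one_iff.mp (by exact_mod_cast hglt)
  have hSR : (0:ℚ) ≤ ∑ k, R k := by
    apply Finset.sum_nonneg
    intro k _
    rw [hR k]
    have hlen : (m k).length ≤ d := by
      rw [← hmsum k]; exact length_le_sum' (m k) (hmpos k)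
    have : ((m k).length : ℚ) ≤ (d : ℚ) := by exact_mod_cast hlen
    linarith
  have hg₀0 : g₀ = 0 := by
    rcases Nat.eq_zero_or_pos g₀ with h | h
    · exact h
    · exfalso
      have hg₀Q : (1:ℚ) ≤ (g₀ : ℚ) := by exact_mod_cast h
      have hBQ : (0:ℚ) ≤ (B : ℚ) := Nat.cast_nonneg B
      rw [hg0] at hRH
      push_cast at hRH
      nlinarith [hRH, hSR, hBQ, hdpos, hg₀Q]
  refine ⟨hg0, hg₀0, ?_⟩
  rw [abs_of_neg hχneg]
  rw [hg0] at hgle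
  push_cast at hgle
  linarith
end

section
/- Let g₀ ≥ 0 be an integer, n ≥ 1, and for k = 1,…,n let κ_k ∈ (1/2)·ℤ≥0, with at least one κ_k > 0; for each k with κ_k = 0 let ν_k be either an integer ≥ 2 or ∞ (with the convention 1/∞ = 0). Assume 2g₀ − 2 + Σ_{k : κ_k = 0} (1 − 1/ν_k) + Σ_{k : κ_k > 0} (1 + κ_k) ≤ 0. Then g₀ = 0 and exactly one of the following holds: (i) n = 1 and κ₁ = 1; (ii) n = 1 and κ₁ = 1/2; (iii) n = 2 and, up to ordering, κ₁ = 1/2 and κ₂ = 0 with ν₂ = 2. -/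
/-- Arithmetic classification underlying "non-negative irregular Euler
characteristic implies virtually abelian Galois group": if `g₀ ≥ 0`, `n ≥ 1`,
the irregularity indices `κ k ∈ (1/2)ℤ≥0` with at least one `κ k > 0`, and
orbifold orders `ν k ∈ ℤ≥2 ∪ {∞}` at the logarithmic poles (convention
`ν k = 0` means `ν k = ∞`, so that `1/(ν k : ℚ) = 0`), and if
`2g₀ - 2 + Σ_{κ k = 0} (1 - 1/ν k) + Σ_{κ k > 0} (1 + κ k) ≤ 0`,
then `g₀ = 0` and exactly one of the following holds:
(i) `n = 1` and `κ = 1`; (ii) `n = 1` and `κ = 1/2`;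
(iii) `n = 2` with, up to ordering, `κ = (1/2, 0)` and `ν = 2` at the
logarithmic pole. -/
theorem nonneg_irregular_euler_characteristic_classification
    (g₀ n : ℕ) (hn : 1 ≤ n)
    (κ : Fin n → ℚ) (hκ : ∀ k, ∃ j : ℕ, 2 * κ k = (j : ℚ))
    (hirr : ∃ k, 0 < κ k)
    (ν : Fin n → ℕ) (hν : ∀ k, κ k = 0 → ν k = 0 ∨ 2 ≤ ν k)
    (hle : 2 * (g₀ : ℚ) - 2
        + (∑ k, if κ k = 0 then 1 - 1 / (ν k : ℚ) else 0)
        + (∑ k, if 0 < κ k then 1 + κ k else 0) ≤ 0) :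
    g₀ = 0 ∧
      ((n = 1 ∧ ∀ k, κ k = 1) ∨
       (n = 1 ∧ ∀ k, κ k = 1 / 2) ∨
       (n = 2 ∧ ∃ k₁ k₂ : Fin n, k₁ ≠ k₂ ∧
          κ k₁ = 1 / 2 ∧ κ k₂ = 0 ∧ ν k₂ = 2)) := by
  classical
  set f : Fin n → ℚ := fun k => if κ k = 0 then 1 - 1 / (ν k : ℚ) else 1 + κ k with hf
  have κnn : ∀ k, 0 ≤ κ k := by
    intro k
    obtain ⟨j, hj⟩ := hκ k
    have : (0:ℚ) ≤ j := Nat.cast_nonneg j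
    linarith
  have κhalf : ∀ k, 0 < κ k → 1/2 ≤ κ k := by
    intro k hk
    obtain ⟨j, hj⟩ := hκ k
    have hj0 : j ≠ 0 := by rintro rfl; simp at hj; linarith
    have : (1:ℚ) ≤ j := by exact_mod_cast Nat.one_le_iff_ne_zero.mpr hj0
    linarith
  have fhalf : ∀ k, 1/2 ≤ f k := by
    intro k
    by_cases h : κ k = 0
    · rcases hν k h with h2 | h2
      · simp only [hf, h, h2, if_pos]; norm_num
      · have hpos : (0:ℚ) < ν k := by positivity
        have hν2 : (2:ℚ) ≤ (ν k : ℚ) := by exact_mod_cast h2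
        have : (1:ℚ) / (ν k : ℚ) ≤ 1/2 := by
          rw [div_le_div_iff₀ hpos (by norm_num)]
          linarith
        simp only [hf, h, if_pos]
        linarith
    · have hk : 0 < κ k := lt_of_le_of_ne (κnn k) (Ne.symm h)
      have := κhalf k hk
      simp only [hf, if_neg h]
      linarith
  have firr : ∀ k, 0 < κ k → f k = 1 + κ k := by
    intro k hk
    simp [hf, ne_of_gt hk]
  have flog : ∀ k, κ k = 0 → f k = 1 - 1 / (ν k : ℚ) := by
    intro k hk; simp [hf, hk]
  have hsum : ∑ k, f k = (∑ k, if κ k = 0 then 1 - 1 / (ν k : ℚ) else 0)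
      + (∑ k, if 0 < κ k then 1 + κ k else 0) := by
    rw [← Finset.sum_add_distrib]
    apply Finset.sum_congr rfl
    intro k _
    by_cases h : κ k = 0
    · simp [hf, h, not_lt.mpr (le_of_eq h.symm)]
    · have hk : 0 < κ k := lt_of_le_of_ne (κnn k) (Ne.symm h)
      simp [hf, h, hk]
  have hS : ∑ k, f k ≤ 2 - 2 * (g₀ : ℚ) := by rw [hsum]; linarith
  obtain ⟨k₀, hk₀⟩ := hirr
  have fk₀ : 3/2 ≤ f k₀ := by rw [firr k₀ hk₀]; linarith [κhalf k₀ hk₀]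
  have hsplit : ∑ k, f k = f k₀ + ∑ k ∈ Finset.univ.erase k₀, f k :=
    (Finset.add_sum_erase _ f (Finset.mem_univ k₀)).symm
  have hrest : ((n:ℚ) - 1) / 2 ≤ ∑ k ∈ Finset.univ.erase k₀, f k := by
    have hcard : (Finset.univ.erase k₀).card = n - 1 := by
      rw [Finset.card_erase_of_mem (Finset.mem_univ k₀)]
      simp
    have := Finset.card_nsmul_le_sum (Finset.univ.erase k₀) f (1/2)
      (fun i _ => fhalf i)
    rw [hcard] at this
    have hc : ((n - 1 : ℕ) : ℚ) = (n : ℚ) - 1 := by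
      have : (1:ℕ) ≤ n := hn
      push_cast [Nat.cast_sub this]
      ring
    rw [nsmul_eq_mul, hc] at this
    linarith
  have hg0 : g₀ = 0 := by
    have : 2 * (g₀ : ℚ) ≤ 1/2 := by
      have hn1 : (1:ℚ) ≤ (n:ℚ) := by exact_mod_cast hn
      linarith
    have : (g₀ : ℚ) < 1 := by linarith
    exact_mod_cast Nat.lt_one_iff.mp (by exact_mod_cast this)
  refine ⟨hg0, ?_⟩
  rw [hg0] at hS
  push_cast at hS
  have hSle : ∑ k, f k ≤ 2 := by linarith
  have hn2 : n ≤ 2 := by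
    have : ((n:ℚ) - 1) / 2 + 3/2 ≤ 2 := by linarith
    have : (n:ℚ) ≤ 2 := by linarith
    exact_mod_cast this
  interval_cases n
  · -- n = 1
    have h0 : k₀ = 0 := Subsingleton.elim _ _
    have hsum1 : ∑ k, f k = f k₀ := by rw [h0, Fin.sum_univ_one]
    have hf2 : f k₀ ≤ 2 := by rw [hsum1] at hSle; exact hSle
    rw [firr k₀ hk₀] at hf2
    have hκ1 : κ k₀ ≤ 1 := by linarith
    obtain ⟨j, hj⟩ := hκ k₀
    have hj1 : 1 ≤ j := by
      by_contra h
      push_neg at h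
      interval_cases j
      · simp at hj; linarith
    have hj2 : j ≤ 2 := by
      by_contra h
      push_neg at h
      have : (3:ℚ) ≤ j := by exact_mod_cast h
      linarith
    interval_cases j
    · right; left
      refine ⟨rfl, fun k => ?_⟩
      have : k = k₀ := Subsingleton.elim _ _
      rw [this]
      push_cast at hj
      linarith
    · left
      refine ⟨rfl, fun k => ?_⟩
      have : k = k₀ := Subsingleton.elim _ _
      rw [this]
      push_cast at hj
      linarith
  · -- n = 2
    right; right
    refine ⟨rfl, ?_⟩
    obtain ⟨k₂, hk₂ne⟩ := exists_ne k₀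
    have hsum2 : ∑ k, f k = f k₀ + f k₂ := by
      rw [hsplit]
      congr 1
      have : Finset.univ.erase k₀ = {k₂} := by
        apply Finset.eq_singleton_iff_unique_mem.mpr
        constructor
        · simp [hk₂ne]
        · intro x hx
          simp only [Finset.mem_erase, Finset.mem_univ, and_true] at hx
          omega
      rw [this, Finset.sum_singleton]
    have hineq : f k₀ + f k₂ ≤ 2 := by rw [← hsum2]; exact hSle
    have hfk₂ : f k₂ ≤ 1/2 := by linarith
    have hfk₀3 : f k₀ ≤ 3/2 := by linarith [fhalf k₂]
    -- κ k₀ = 1/2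
    have hκk₀ : κ k₀ = 1/2 := by
      rw [firr k₀ hk₀] at hfk₀3
      linarith [κhalf k₀ hk₀]
    -- κ k₂ = 0
    have hκk₂ : κ k₂ = 0 := by
      by_contra h
      have hk : 0 < κ k₂ := lt_of_le_of_ne (κnn k₂) (Ne.symm h)
      rw [firr k₂ hk] at hfk₂
      linarith [κhalf k₂ hk]
    have hfk₂' : f k₂ = 1 - 1/(ν k₂ : ℚ) := flog k₂ hκk₂
    have hν2 : ν k₂ = 2 := by
      rcases hν k₂ hκk₂ with h | h
      · rw [h] at hfk₂'; simp at hfk₂'; rw [hfk₂'] at hfk₂; linarith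
      · have hpos : (0:ℚ) < ν k₂ := by positivity
        have h1 : (1:ℚ)/2 ≤ 1/(ν k₂:ℚ) := by rw [hfk₂'] at hfk₂; linarith
        have h2 : (1:ℚ) * ν k₂ ≤ 1 * 2 := (div_le_div_iff₀ (by norm_num) hpos).mp h1
        have h3 : (ν k₂:ℚ) = 2 := le_antisymm (by linarith) (by exact_mod_cast h)
        exact_mod_cast h3
    exact ⟨k₀, k₂, hk₂ne.symm, hκk₀, hκk₂, hν2⟩
end
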